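/- arXiv:2411.08295 — 3 statements merged into one kernel-verified Lean document; each statement's English description precedes it below -/
import Mathlib

section
/- Let P be π-reversible and Q an isometric involution transition matrix with respect to π, and for α ∈ (0,1) define P̄_α(Q) = αP + (1−α)QPQ. Then λ₂(P̄_α(Q)) ≤ λ₂(P) and λ_n(P) ≤ λ_n(P̄_α(Q)), where n = |X| and λ₁ ≥ λ₂ ≥ ... ≥ λ_n denote the eigenvalues (all real, since all three matrices are self-adjoint on ℓ²(π)) arranged in non-increasing order. -/
open Matrix BigOperators

/-- The π-weighted inner product `⟨f,g⟩_π = Σ_x f(x) g(x) π(x)`. -/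
noncomputable def ipPi {X : Type*} [Fintype X] (π : X → ℝ) (f g : X → ℝ) : ℝ :=
  ∑ x, f x * g x * π x

/-- The second largest eigenvalue of a π-self-adjoint stochastic matrix, via the
variational (Courant–Fischer) characterization over `ℓ²₀(π)` (the orthogonal
complement of the constants, i.e. of the top eigenvector). -/
noncomputable def lamTwo {X : Type*} [Fintype X] (π : X → ℝ) (A : Matrix X X ℝ) : ℝ :=
  sSup {r : ℝ | ∃ f : X → ℝ, (∑ x, π x * f x) = 0 ∧ ipPi π f f = 1 ∧
    r = ipPi π (A.mulVec f) f}

/-- The smallest eigenvalue of a π-self-adjoint matrix, via the variational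
characterization. -/
noncomputable def lamMin {X : Type*} [Fintype X] (π : X → ℝ) (A : Matrix X X ℝ) : ℝ :=
  sInf {r : ℝ | ∃ f : X → ℝ, ipPi π f f = 1 ∧ r = ipPi π (A.mulVec f) f}

lemma ip_adj {X : Type*} [Fintype X] (π : X → ℝ) (M : Matrix X X ℝ)
    (hdb : ∀ x y, π x * M x y = π y * M y x) (g f : X → ℝ) :
    ipPi π (M.mulVec g) f = ipPi π g (M.mulVec f) := by
  unfold ipPi Matrix.mulVec dotProduct
  simp only [Finset.sum_mul, Finset.mul_sum]
  rw [Finset.sum_comm]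
  apply Finset.sum_congr rfl; intro y _
  apply Finset.sum_congr rfl; intro x _
  linear_combination g y * f x * hdb x y

lemma mix_apply {X : Type*} [Fintype X] (π : X → ℝ) (P M : Matrix X X ℝ) (α : ℝ)
    (f : X → ℝ) :
    ipPi π ((α • P + (1 - α) • M).mulVec f) f
      = α * ipPi π (P.mulVec f) f + (1 - α) * ipPi π (M.mulVec f) f := by
  unfold ipPi
  simp only [Matrix.add_mulVec, Matrix.smul_mulVec, Pi.add_apply, Pi.smul_apply,
    smul_eq_mul, Finset.mul_sum]
  rw [← Finset.sum_add_distrib]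
  apply Finset.sum_congr rfl; intros; ring

lemma ip_bound {X : Type*} [Fintype X] (π : X → ℝ) (hπ : ∀ x, 0 < π x)
    (P : Matrix X X ℝ) (hPnn : ∀ x y, 0 ≤ P x y) (hProw : ∀ x, ∑ y, P x y = 1)
    (hPrev : ∀ x y, π x * P x y = π y * P y x) (f : X → ℝ) :
    |ipPi π (P.mulVec f) f| ≤ ipPi π f f := by
  have h1 : ipPi π (P.mulVec f) f = ∑ x, ∑ y, π x * P x y * (f y * f x) := by
    unfold ipPi Matrix.mulVec dotProduct
    apply Finset.sum_congr rfl; intro x _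
    rw [Finset.sum_mul, Finset.sum_mul]
    apply Finset.sum_congr rfl; intro y _; ring
  have habs : |∑ x, ∑ y, π x * P x y * (f y * f x)| ≤
      ∑ x, ∑ y, π x * P x y * ((f x ^ 2 + f y ^ 2) / 2) := by
    calc |∑ x, ∑ y, π x * P x y * (f y * f x)|
        ≤ ∑ x, |∑ y, π x * P x y * (f y * f x)| := Finset.abs_sum_le_sum_abs _ _
      _ ≤ ∑ x, ∑ y, |π x * P x y * (f y * f x)| := by
          apply Finset.sum_le_sum; intro x _
          exact Finset.abs_sum_le_sum_abs _ _
      _ ≤ _ := by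
          apply Finset.sum_le_sum; intro x _
          apply Finset.sum_le_sum; intro y _
          have h0 : 0 ≤ π x * P x y := mul_nonneg (hπ x).le (hPnn x y)
          rw [abs_mul, abs_of_nonneg h0]
          apply mul_le_mul_of_nonneg_left _ h0
          have h2 : |f y * f x| = |f y| * |f x| := abs_mul _ _
          nlinarith [sq_nonneg (|f x| - |f y|), sq_abs (f x), sq_abs (f y),
            abs_nonneg (f x), abs_nonneg (f y)]
  have h2 : ∑ x, ∑ y, π x * P x y * ((f x ^ 2 + f y ^ 2) / 2) = ipPi π f f := by
    have hsplit : ∀ x : X, ∑ y, π x * P x y * ((f x ^ 2 + f y ^ 2) / 2)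
        = ∑ y, π x * P x y * (f x ^ 2 / 2) + ∑ y, π x * P x y * (f y ^ 2 / 2) := by
      intro x
      rw [← Finset.sum_add_distrib]
      apply Finset.sum_congr rfl; intros; ring
    simp only [hsplit]
    rw [Finset.sum_add_distrib]
    have hA : ∑ x, ∑ y, π x * P x y * (f x ^ 2 / 2) = ∑ x, π x * f x ^ 2 / 2 := by
      apply Finset.sum_congr rfl; intro x _
      have : ∑ y, π x * P x y * (f x ^ 2 / 2) = (∑ y, P x y) * (π x * (f x ^ 2 / 2)) := by
        rw [Finset.sum_mul]
        apply Finset.sum_congr rfl; intros; ring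
      rw [this, hProw]; ring
    have hB : ∑ x, ∑ y, π x * P x y * (f y ^ 2 / 2) = ∑ y, π y * f y ^ 2 / 2 := by
      rw [Finset.sum_comm]
      apply Finset.sum_congr rfl; intro y _
      have : ∑ x, π x * P x y * (f y ^ 2 / 2) = (∑ x, P y x) * (π y * (f y ^ 2 / 2)) := by
        rw [Finset.sum_mul]
        apply Finset.sum_congr rfl; intro x _
        linear_combination (f y ^ 2 / 2) * hPrev x y
      rw [this, hProw]; ring
    rw [hA, hB]
    unfold ipPi
    rw [← Finset.sum_add_distrib]
    apply Finset.sum_congr rfl; intros; ring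
  rw [h1]
  exact habs.trans_eq h2

theorem weyl_comparison_of_mixture
    {X : Type*} [Fintype X] [DecidableEq X]
    (π : X → ℝ) (hπpos : ∀ x, 0 < π x) (hπsum : ∑ x, π x = 1)
    (Q : Matrix X X ℝ)
    (hQnn : ∀ x y, 0 ≤ Q x y) (hQrow : ∀ x, ∑ y, Q x y = 1)
    (hQinv : Q * Q = 1) (hQdb : ∀ x y, π x * Q x y = π y * Q y x)
    (P : Matrix X X ℝ)
    (hPnn : ∀ x y, 0 ≤ P x y) (hProw : ∀ x, ∑ y, P x y = 1)
    (hPrev : ∀ x y, π x * P x y = π y * P y x)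
    (α : ℝ) (hα : 0 < α) (hα1 : α < 1) :
    lamTwo π (α • P + (1 - α) • (Q * P * Q)) ≤ lamTwo π P ∧
      lamMin π P ≤ lamMin π (α • P + (1 - α) • (Q * P * Q)) := by
  have hQQ : ∀ f : X → ℝ, Q.mulVec (Q.mulVec f) = f := by
    intro f; rw [Matrix.mulVec_mulVec, hQinv, Matrix.one_mulVec]
  have hQnorm : ∀ f : X → ℝ, ipPi π (Q.mulVec f) (Q.mulVec f) = ipPi π f f := by
    intro f; rw [ip_adj π Q hQdb, hQQ]
  have hQmean : ∀ f : X → ℝ, (∑ x, π x * (Q.mulVec f) x) = ∑ x, π x * f x := by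
    intro f
    simp only [Matrix.mulVec, dotProduct, Finset.mul_sum]
    rw [Finset.sum_comm]
    apply Finset.sum_congr rfl; intro y _
    have : ∑ x, π x * (Q x y * f y) = (∑ x, Q y x) * (π y * f y) := by
      rw [Finset.sum_mul]
      apply Finset.sum_congr rfl; intro x _
      linear_combination f y * hQdb x y
    rw [this, hQrow]; ring
  have hMray : ∀ f : X → ℝ, ipPi π ((Q * P * Q).mulVec f) f
      = ipPi π (P.mulVec (Q.mulVec f)) (Q.mulVec f) := by
    intro f
    have : (Q * P * Q).mulVec f = Q.mulVec (P.mulVec (Q.mulVec f)) := by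
      rw [Matrix.mulVec_mulVec, Matrix.mulVec_mulVec, Matrix.mul_assoc]
    rw [this, ip_adj π Q hQdb]
  have hbound := ip_bound π hπpos P hPnn hProw hPrev
  constructor
  · -- lamTwo
    by_cases hC : ∃ f : X → ℝ, (∑ x, π x * f x) = 0 ∧ ipPi π f f = 1
    · obtain ⟨f0, hf0m, hf0n⟩ := hC
      have bddP : BddAbove {r : ℝ | ∃ f : X → ℝ, (∑ x, π x * f x) = 0 ∧ ipPi π f f = 1 ∧
          r = ipPi π (P.mulVec f) f} := by
        refine ⟨1, ?_⟩
        rintro r ⟨f, _, hn, rfl⟩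
        have := hbound f
        rw [hn] at this
        exact (abs_le.1 this).2
      have hne : Set.Nonempty {r : ℝ | ∃ f : X → ℝ, (∑ x, π x * f x) = 0 ∧
          ipPi π f f = 1 ∧
          r = ipPi π ((α • P + (1 - α) • (Q * P * Q)).mulVec f) f} :=
        ⟨_, f0, hf0m, hf0n, rfl⟩
      unfold lamTwo
      apply csSup_le hne
      rintro r ⟨f, hm, hn, rfl⟩
      have h1 := le_csSup bddP ⟨f, hm, hn, rfl⟩
      have h2 := le_csSup bddP
        ⟨Q.mulVec f, by rw [hQmean]; exact hm, by rw [hQnorm]; exact hn, rfl⟩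
      rw [mix_apply, hMray]
      nlinarith [h1, h2]
    · have e1 : {r : ℝ | ∃ f : X → ℝ, (∑ x, π x * f x) = 0 ∧ ipPi π f f = 1 ∧
          r = ipPi π ((α • P + (1 - α) • (Q * P * Q)).mulVec f) f} = ∅ := by
        ext r; simp only [Set.mem_setOf_eq, Set.mem_empty_iff_false, iff_false]
        rintro ⟨f, hm, hn, _⟩; exact hC ⟨f, hm, hn⟩
      have e2 : {r : ℝ | ∃ f : X → ℝ, (∑ x, π x * f x) = 0 ∧ ipPi π f f = 1 ∧
          r = ipPi π (P.mulVec f) f} = ∅ := by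
        ext r; simp only [Set.mem_setOf_eq, Set.mem_empty_iff_false, iff_false]
        rintro ⟨f, hm, hn, _⟩; exact hC ⟨f, hm, hn⟩
      unfold lamTwo
      rw [e1, e2]
  · -- lamMin
    have hone : ipPi π (fun _ => (1 : ℝ)) (fun _ => (1 : ℝ)) = 1 := by
      unfold ipPi; simpa using hπsum
    have bddP : BddBelow {r : ℝ | ∃ f : X → ℝ, ipPi π f f = 1 ∧
        r = ipPi π (P.mulVec f) f} := by
      refine ⟨-1, ?_⟩
      rintro r ⟨f, hn, rfl⟩
      have := hbound f
      rw [hn] at this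
      exact (abs_le.1 this).1
    have hne : Set.Nonempty {r : ℝ | ∃ f : X → ℝ, ipPi π f f = 1 ∧
        r = ipPi π ((α • P + (1 - α) • (Q * P * Q)).mulVec f) f} :=
      ⟨_, (fun _ => (1 : ℝ)), hone, rfl⟩
    unfold lamMin
    apply le_csInf hne
    rintro r ⟨f, hn, rfl⟩
    have h1 := csInf_le bddP ⟨f, hn, rfl⟩
    have h2 := csInf_le bddP ⟨Q.mulVec f, by rw [hQnorm]; exact hn, rfl⟩
    rw [mix_apply, hMray]
    nlinarith [h1, h2]
end

section
/- Let P be π-reversible with Q an isometric involution transition matrix with respect to π, and suppose P is positive semi-definite on ℓ²(π). Then for α ∈ (0,1), max{α, 1−α}·λ₂(P) ≤ λ₂(αP + (1−α)QPQ) ≤ λ₂(P). -/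
open Matrix BigOperators

section Aux

variable {X : Type*} [Fintype X]

lemma ipPi_symm (π : X → ℝ) (f g : X → ℝ) : ipPi π f g = ipPi π g f :=
  Finset.sum_congr rfl fun x _ => by ring

lemma selfAdj (π : X → ℝ) (A : Matrix X X ℝ)
    (hA : ∀ x y, π x * A x y = π y * A y x) (f g : X → ℝ) :
    ipPi π (A.mulVec f) g = ipPi π (A.mulVec g) f := by
  unfold ipPi
  simp only [Matrix.mulVec, dotProduct, Finset.sum_mul]
  rw [Finset.sum_comm]
  refine Finset.sum_congr rfl fun y _ => Finset.sum_congr rfl fun x _ => ?_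
  linear_combination f y * g x * hA x y

lemma meanQ (π : X → ℝ) (Q : Matrix X X ℝ) (hQrow : ∀ x, ∑ y, Q x y = 1)
    (hQdb : ∀ x y, π x * Q x y = π y * Q y x) (f : X → ℝ) :
    ∑ x, π x * (Q.mulVec f) x = ∑ x, π x * f x := by
  simp only [Matrix.mulVec, dotProduct, Finset.mul_sum]
  rw [Finset.sum_comm]
  refine Finset.sum_congr rfl fun y _ => ?_
  have h1 : ∀ x ∈ Finset.univ, π x * (Q x y * f y) = Q y x * (π y * f y) :=
    fun x _ => by linear_combination f y * hQdb x y
  rw [Finset.sum_congr rfl h1, ← Finset.sum_mul, hQrow y, one_mul]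

lemma rayleigh_le (π : X → ℝ) (A : Matrix X X ℝ) (hπ : ∀ x, 0 ≤ π x)
    (hAnn : ∀ x y, 0 ≤ A x y) (hArow : ∀ x, ∑ y, A x y = 1)
    (hArev : ∀ x y, π x * A x y = π y * A y x) (f : X → ℝ) :
    ipPi π (A.mulVec f) f ≤ ipPi π f f := by
  have expand : ipPi π (A.mulVec f) f = ∑ x, ∑ y, π x * A x y * (f y * f x) := by
    unfold ipPi
    simp only [Matrix.mulVec, dotProduct, Finset.sum_mul]
    exact Finset.sum_congr rfl fun x _ => Finset.sum_congr rfl fun y _ => by ring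
  have h1 : ∑ x, ∑ y, π x * A x y * (f x * f x) = ipPi π f f := by
    unfold ipPi
    refine Finset.sum_congr rfl fun x _ => ?_
    have h : ∀ y ∈ Finset.univ, π x * A x y * (f x * f x) = A x y * (π x * (f x * f x)) :=
      fun y _ => by ring
    rw [Finset.sum_congr rfl h, ← Finset.sum_mul, hArow x, one_mul]
    ring
  have h2 : ∑ x, ∑ y, π x * A x y * (f y * f y) = ipPi π f f := by
    have h : ∀ x ∈ (Finset.univ : Finset X), ∀ y ∈ (Finset.univ : Finset X),
        π x * A x y * (f y * f y) = π y * A y x * (f y * f y) :=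
      fun x _ y _ => by linear_combination (f y * f y) * hArev x y
    rw [Finset.sum_congr rfl (fun x hx => Finset.sum_congr rfl (h x hx)), Finset.sum_comm]
    exact h1 ▸ (Finset.sum_congr rfl fun x _ => Finset.sum_congr rfl fun y _ => rfl)
  rw [expand]
  have key : ∀ x y, π x * A x y * (f y * f x) ≤ π x * A x y * ((f x * f x + f y * f y) / 2) := by
    intro x y
    have h := mul_nonneg (hπ x) (hAnn x y)
    nlinarith [sq_nonneg (f x - f y)]
  calc ∑ x, ∑ y, π x * A x y * (f y * f x)
      ≤ ∑ x, ∑ y, π x * A x y * ((f x * f x + f y * f y) / 2) :=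
        Finset.sum_le_sum fun x _ => Finset.sum_le_sum fun y _ => key x y
    _ = ((∑ x, ∑ y, π x * A x y * (f x * f x)) + ∑ x, ∑ y, π x * A x y * (f y * f y)) / 2 := by
        rw [← Finset.sum_add_distrib, Finset.sum_div]
        refine Finset.sum_congr rfl fun x _ => ?_
        rw [← Finset.sum_add_distrib, Finset.sum_div]
        exact Finset.sum_congr rfl fun y _ => by ring
    _ = ipPi π f f := by rw [h1, h2]; ring

end Aux

theorem psd_mixture_lamTwo_bounds
    {X : Type*} [Fintype X] [DecidableEq X]
    (π : X → ℝ) (hπpos : ∀ x, 0 < π x) (hπsum : ∑ x, π x = 1)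
    (Q : Matrix X X ℝ)
    (hQnn : ∀ x y, 0 ≤ Q x y) (hQrow : ∀ x, ∑ y, Q x y = 1)
    (hQinv : Q * Q = 1) (hQdb : ∀ x y, π x * Q x y = π y * Q y x)
    (P : Matrix X X ℝ)
    (hPnn : ∀ x y, 0 ≤ P x y) (hProw : ∀ x, ∑ y, P x y = 1)
    (hPrev : ∀ x y, π x * P x y = π y * P y x)
    (hPpsd : ∀ f : X → ℝ, 0 ≤ ipPi π (P.mulVec f) f)
    (α : ℝ) (hα : 0 < α) (hα1 : α < 1) :
    max α (1 - α) * lamTwo π P ≤ lamTwo π (α • P + (1 - α) • (Q * P * Q)) ∧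
      lamTwo π (α • P + (1 - α) • (Q * P * Q)) ≤ lamTwo π P := by
  set S : Matrix X X ℝ := α • P + (1 - α) • (Q * P * Q) with hSdef
  have hπ : ∀ x, (0:ℝ) ≤ π x := fun x => (hπpos x).le
  have hQQ : ∀ f : X → ℝ, Q.mulVec (Q.mulVec f) = f := by
    intro f
    rw [Matrix.mulVec_mulVec, hQinv, Matrix.one_mulVec]
  -- Rayleigh quotient decomposition for S
  have hRS : ∀ f : X → ℝ, ipPi π (S.mulVec f) f
      = α * ipPi π (P.mulVec f) f
        + (1 - α) * ipPi π (P.mulVec (Q.mulVec f)) (Q.mulVec f) := by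
    intro f
    have h1 : S.mulVec f = α • P.mulVec f + (1 - α) • (Q * P * Q).mulVec f := by
      rw [hSdef, Matrix.add_mulVec, Matrix.smul_mulVec, Matrix.smul_mulVec]
    have h3 : (Q * P * Q).mulVec f = Q.mulVec (P.mulVec (Q.mulVec f)) := by
      rw [Matrix.mulVec_mulVec, Matrix.mulVec_mulVec]
    have h4 : ipPi π ((Q * P * Q).mulVec f) f
        = ipPi π (P.mulVec (Q.mulVec f)) (Q.mulVec f) := by
      rw [h3, selfAdj π Q hQdb, ipPi_symm]
    have h2 : ipPi π (S.mulVec f) f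
        = α * ipPi π (P.mulVec f) f + (1 - α) * ipPi π ((Q * P * Q).mulVec f) f := by
      rw [h1]
      unfold ipPi
      rw [Finset.mul_sum, Finset.mul_sum, ← Finset.sum_add_distrib]
      refine Finset.sum_congr rfl fun x _ => ?_
      simp only [Pi.add_apply, Pi.smul_apply, smul_eq_mul]
      ring
    rw [h2, h4]
  -- feasibility is preserved by Q
  have feasQ : ∀ f : X → ℝ, (∑ x, π x * f x) = 0 → ipPi π f f = 1 →
      (∑ x, π x * (Q.mulVec f) x) = 0 ∧ ipPi π (Q.mulVec f) (Q.mulVec f) = 1 := by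
    intro f hm hn
    refine ⟨by rw [meanQ π Q hQrow hQdb f, hm], ?_⟩
    calc ipPi π (Q.mulVec f) (Q.mulVec f)
        = ipPi π (Q.mulVec (Q.mulVec f)) f := selfAdj π Q hQdb f (Q.mulVec f)
      _ = ipPi π f f := by rw [hQQ f]
      _ = 1 := hn
  set SP := {r : ℝ | ∃ f : X → ℝ, (∑ x, π x * f x) = 0 ∧ ipPi π f f = 1 ∧
    r = ipPi π (P.mulVec f) f} with hSPdef
  set SS := {r : ℝ | ∃ f : X → ℝ, (∑ x, π x * f x) = 0 ∧ ipPi π f f = 1 ∧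
    r = ipPi π (S.mulVec f) f} with hSSdef
  have hlamP : lamTwo π P = sSup SP := rfl
  have hlamS : lamTwo π S = sSup SS := rfl
  have bddSP : BddAbove SP := by
    refine ⟨1, ?_⟩
    rintro r ⟨f, hm, hn, rfl⟩
    calc ipPi π (P.mulVec f) f ≤ ipPi π f f := rayleigh_le π P hπ hPnn hProw hPrev f
      _ = 1 := hn
  have bddSS : BddAbove SS := by
    refine ⟨1, ?_⟩
    rintro r ⟨f, hm, hn, rfl⟩
    obtain ⟨hmQ, hnQ⟩ := feasQ f hm hn
    have l1 : ipPi π (P.mulVec f) f ≤ 1 :=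
      hn ▸ rayleigh_le π P hπ hPnn hProw hPrev f
    have l2 : ipPi π (P.mulVec (Q.mulVec f)) (Q.mulVec f) ≤ 1 :=
      hnQ ▸ rayleigh_le π P hπ hPnn hProw hPrev (Q.mulVec f)
    rw [hRS f]
    nlinarith
  have hPge : 0 ≤ lamTwo π P := by
    rw [hlamP]
    rcases Set.eq_empty_or_nonempty SP with h | ⟨r, hr⟩
    · rw [h, Real.sSup_empty]
    · obtain ⟨f, hm, hn, rfl⟩ := hr
      exact le_trans (hPpsd f) (le_csSup bddSP ⟨f, hm, hn, rfl⟩)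
  have hSge : 0 ≤ lamTwo π S := by
    rw [hlamS]
    rcases Set.eq_empty_or_nonempty SS with h | ⟨r, hr⟩
    · rw [h, Real.sSup_empty]
    · obtain ⟨f, hm, hn, rfl⟩ := hr
      have nn : 0 ≤ ipPi π (S.mulVec f) f := by
        rw [hRS f]
        have p1 := hPpsd f
        have p2 := hPpsd (Q.mulVec f)
        nlinarith
      exact le_trans nn (le_csSup bddSS ⟨f, hm, hn, rfl⟩)
  have upper : lamTwo π S ≤ lamTwo π P := by
    rw [hlamS]
    refine Real.sSup_le ?_ hPge
    rintro r ⟨f, hm, hn, rfl⟩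
    obtain ⟨hmQ, hnQ⟩ := feasQ f hm hn
    have l1 : ipPi π (P.mulVec f) f ≤ lamTwo π P :=
      hlamP ▸ le_csSup bddSP ⟨f, hm, hn, rfl⟩
    have l2 : ipPi π (P.mulVec (Q.mulVec f)) (Q.mulVec f) ≤ lamTwo π P :=
      hlamP ▸ le_csSup bddSP ⟨Q.mulVec f, hmQ, hnQ, rfl⟩
    rw [hRS f]
    nlinarith
  have hc : 0 < max α (1 - α) := lt_max_iff.2 (Or.inl hα)
  have lower : max α (1 - α) * lamTwo π P ≤ lamTwo π S := by
    have hSP : lamTwo π P ≤ lamTwo π S / max α (1 - α) := by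
      rw [hlamP]
      refine Real.sSup_le ?_ (div_nonneg hSge hc.le)
      rintro r ⟨f, hm, hn, rfl⟩
      rw [le_div_iff₀ hc]
      obtain ⟨hmQ, hnQ⟩ := feasQ f hm hn
      have l1 : ipPi π (S.mulVec f) f ≤ lamTwo π S :=
        hlamS ▸ le_csSup bddSS ⟨f, hm, hn, rfl⟩
      have l2 : ipPi π (S.mulVec (Q.mulVec f)) (Q.mulVec f) ≤ lamTwo π S :=
        hlamS ▸ le_csSup bddSS ⟨Q.mulVec f, hmQ, hnQ, rfl⟩
      rw [hRS f] at l1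
      rw [hRS (Q.mulVec f), hQQ f] at l2
      have p1 := hPpsd f
      have p2 := hPpsd (Q.mulVec f)
      rcases max_cases α (1 - α) with ⟨hmax, _⟩ | ⟨hmax, _⟩ <;> rw [hmax] <;> nlinarith
    calc max α (1 - α) * lamTwo π P
        ≤ max α (1 - α) * (lamTwo π S / max α (1 - α)) :=
          mul_le_mul_of_nonneg_left hSP hc.le
      _ = lamTwo π S := mul_div_cancel₀ _ hc.ne'
  exact ⟨lower, upper⟩
end

section
/- Let P be ergodic π-reversible and Q an isometric involution transition matrix with respect to π. For α ∈ [0,1] and any f ∈ ℓ²₀(π) with Qf = f or Qf = −f, the asymptotic variance satisfies v(f, αP + (1−α)QPQ) ≤ v(f, P), where v(f,P) = sup_{g ∈ ℓ²₀(π)} [4⟨f,g⟩_π − 2⟨(I−P)g, g⟩_π − ⟨f,f⟩_π]. -/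
open Matrix BigOperators

/-- The asymptotic variance via the variational characterization
`v(f,P) = sup_{g ∈ ℓ²₀(π)} [4⟨f,g⟩_π − 2⟨(I−P)g, g⟩_π − ⟨f,f⟩_π]`. -/
noncomputable def asympVarSup {X : Type*} [Fintype X] [DecidableEq X]
    (π : X → ℝ) (f : X → ℝ) (P : Matrix X X ℝ) : ℝ :=
  sSup {r : ℝ | ∃ g : X → ℝ, (∑ x, π x * g x) = 0 ∧
    r = 4 * ipPi π f g - 2 * ipPi π ((1 - P).mulVec g) g - ipPi π f f}

set_option linter.unusedSectionVars false

section aux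
variable {X : Type*} [Fintype X] [DecidableEq X]

lemma ipPi_comm (π f g : X → ℝ) : ipPi π f g = ipPi π g f :=
  Finset.sum_congr rfl fun x _ => by ring

lemma ipPi_sub_left (π a b c : X → ℝ) : ipPi π (a - b) c = ipPi π a c - ipPi π b c := by
  unfold ipPi
  rw [← Finset.sum_sub_distrib]
  exact Finset.sum_congr rfl fun x _ => by simp [Pi.sub_apply]; ring

lemma ipPi_neg_left (π a c : X → ℝ) : ipPi π (-a) c = - ipPi π a c := by
  unfold ipPi
  rw [← Finset.sum_neg_distrib]
  exact Finset.sum_congr rfl fun x _ => by rw [Pi.neg_apply]; ring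

lemma ipPi_neg_right (π a c : X → ℝ) : ipPi π a (-c) = - ipPi π a c := by
  rw [ipPi_comm, ipPi_neg_left, ipPi_comm]

lemma ipPi_adj (π : X → ℝ) (M : Matrix X X ℝ)
    (hM : ∀ x y, π x * M x y = π y * M y x) (g h : X → ℝ) :
    ipPi π (M.mulVec g) h = ipPi π (M.mulVec h) g := by
  unfold ipPi Matrix.mulVec dotProduct
  simp only [Finset.sum_mul]
  rw [Finset.sum_comm]
  exact Finset.sum_congr rfl fun y _ => Finset.sum_congr rfl fun x _ => by
    linear_combination g y * h x * hM x y

lemma left_invariant (π : X → ℝ) (M : Matrix X X ℝ)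
    (hrow : ∀ x, ∑ y, M x y = 1) (hdb : ∀ x y, π x * M x y = π y * M y x) (y : X) :
    ∑ x, π x * M x y = π y := by
  calc ∑ x, π x * M x y = ∑ x, π y * M y x := Finset.sum_congr rfl fun x _ => hdb x y
    _ = π y := by rw [← Finset.mul_sum, hrow, mul_one]

lemma mean_preserved (π : X → ℝ) (M : Matrix X X ℝ)
    (hrow : ∀ x, ∑ y, M x y = 1) (hdb : ∀ x y, π x * M x y = π y * M y x) (g : X → ℝ) :
    ∑ x, π x * (M.mulVec g) x = ∑ x, π x * g x := by
  unfold Matrix.mulVec dotProduct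
  calc ∑ x, π x * ∑ y, M x y * g y = ∑ x, ∑ y, π x * M x y * g y := by
        refine Finset.sum_congr rfl fun x _ => ?_
        rw [Finset.mul_sum]
        exact Finset.sum_congr rfl fun y _ => by ring
    _ = ∑ y, (∑ x, π x * M x y) * g y := by
        rw [Finset.sum_comm]
        exact Finset.sum_congr rfl fun y _ => by rw [Finset.sum_mul]
    _ = ∑ y, π y * g y := Finset.sum_congr rfl fun y _ => by
        rw [left_invariant π M hrow hdb y]

lemma ipPi_mulVec_le (π : X → ℝ) (hπ : ∀ x, 0 ≤ π x) (P : Matrix X X ℝ)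
    (hPnn : ∀ x y, 0 ≤ P x y) (hProw : ∀ x, ∑ y, P x y = 1)
    (hPrev : ∀ x y, π x * P x y = π y * P y x) (g : X → ℝ) :
    ipPi π (P.mulVec g) g ≤ ipPi π g g := by
  have h1 : ipPi π (P.mulVec g) g = ∑ x, ∑ y, π x * P x y * (g x * g y) := by
    unfold ipPi Matrix.mulVec dotProduct
    refine Finset.sum_congr rfl fun x _ => ?_
    rw [Finset.sum_mul, Finset.sum_mul]
    exact Finset.sum_congr rfl fun y _ => by ring
  have h2 : ∑ x, ∑ y, π x * P x y * g x ^ 2 = ipPi π g g := by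
    unfold ipPi
    refine Finset.sum_congr rfl fun x _ => ?_
    calc ∑ y, π x * P x y * g x ^ 2 = (∑ y, P x y) * (π x * g x ^ 2) := by
          rw [Finset.sum_mul]
          exact Finset.sum_congr rfl fun y _ => by ring
      _ = g x * g x * π x := by rw [hProw]; ring
  have h3 : ∑ x, ∑ y, π x * P x y * g y ^ 2 = ipPi π g g := by
    rw [Finset.sum_comm]
    unfold ipPi
    refine Finset.sum_congr rfl fun y _ => ?_
    calc ∑ x, π x * P x y * g y ^ 2 = (∑ x, π x * P x y) * g y ^ 2 := by
          rw [Finset.sum_mul]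
      _ = g y * g y * π y := by rw [left_invariant π P hProw hPrev y]; ring
  have step : ipPi π (P.mulVec g) g ≤ ∑ x, ∑ y, π x * P x y * (g x ^ 2 + g y ^ 2) / 2 := by
    rw [h1]
    refine Finset.sum_le_sum fun x _ => Finset.sum_le_sum fun y _ => ?_
    nlinarith [sq_nonneg (g x - g y), mul_nonneg (hπ x) (hPnn x y)]
  have split : ∑ x, ∑ y, π x * P x y * (g x ^ 2 + g y ^ 2) / 2
      = (∑ x, ∑ y, π x * P x y * g x ^ 2) / 2 + (∑ x, ∑ y, π x * P x y * g y ^ 2) / 2 := by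
    rw [Finset.sum_div, Finset.sum_div, ← Finset.sum_add_distrib]
    refine Finset.sum_congr rfl fun x _ => ?_
    rw [Finset.sum_div, Finset.sum_div, ← Finset.sum_add_distrib]
    exact Finset.sum_congr rfl fun y _ => by ring
  rw [split, h2, h3] at step
  linarith

end aux

section poisson
variable {X : Type*} [Fintype X] [DecidableEq X]

lemma row_sum_pow (P : Matrix X X ℝ) (hProw : ∀ x, ∑ y, P x y = 1) (m : ℕ) (x : X) :
    ∑ y, (P ^ m) x y = 1 := by
  induction m generalizing x with
  | zero => simp [Matrix.one_apply]
  | succ m ih =>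
    rw [pow_succ]
    simp only [Matrix.mul_apply]
    rw [Finset.sum_comm]
    calc ∑ z, ∑ y, (P ^ m) x z * P z y = ∑ z, (P ^ m) x z * ∑ y, P z y := by
          refine Finset.sum_congr rfl fun z _ => ?_
          rw [Finset.mul_sum]
      _ = 1 := by simp only [hProw, mul_one]; exact ih x

lemma pow_fixed (P : Matrix X X ℝ) (h : X → ℝ) (hPh : P.mulVec h = h) (m : ℕ) :
    (P ^ m).mulVec h = h := by
  induction m with
  | zero => simp
  | succ m ih => rw [pow_succ, ← Matrix.mulVec_mulVec, hPh, ih]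

lemma harmonic_const (P : Matrix X X ℝ) (hPnn : ∀ x y, 0 ≤ P x y)
    (hProw : ∀ x, ∑ y, P x y = 1) (hPerg : ∃ k : ℕ, ∀ x y, 0 < (P ^ k) x y)
    [Nonempty X] (h : X → ℝ) (hPh : P.mulVec h = h) : ∀ x y, h x = h y := by
  obtain ⟨k, hk⟩ := hPerg
  obtain ⟨x0, -, hx0⟩ := Finset.exists_max_image (Finset.univ : Finset X) h
    ⟨Classical.arbitrary X, Finset.mem_univ _⟩
  have hPk := pow_fixed P h hPh k
  have hfix : ∑ y, (P ^ k) x0 y * h y = h x0 := congrFun hPk x0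
  have hzero : ∑ y, (P ^ k) x0 y * (h x0 - h y) = 0 := by
    calc ∑ y, (P ^ k) x0 y * (h x0 - h y)
        = (∑ y, (P ^ k) x0 y) * h x0 - ∑ y, (P ^ k) x0 y * h y := by
          rw [Finset.sum_mul, ← Finset.sum_sub_distrib]
          exact Finset.sum_congr rfl fun y _ => by ring
      _ = 0 := by rw [row_sum_pow P hProw k x0, hfix]; ring
  have hall : ∀ y ∈ Finset.univ, (P ^ k) x0 y * (h x0 - h y) = 0 := by
    rw [← Finset.sum_eq_zero_iff_of_nonneg]
    · exact hzero
    · exact fun y _ => mul_nonneg (hk x0 y).le (sub_nonneg.2 (hx0 y (Finset.mem_univ y)))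
  have heq : ∀ y, h y = h x0 := fun y => by
    rcases mul_eq_zero.1 (hall y (Finset.mem_univ y)) with h1 | h2
    · exact absurd h1 (ne_of_gt (hk x0 y))
    · linarith [sub_eq_zero.1 h2]
  intro x y; rw [heq x, heq y]

lemma exists_poisson (π : X → ℝ) (hπpos : ∀ x, 0 < π x) (hπsum : ∑ x, π x = 1)
    (P : Matrix X X ℝ) (hPnn : ∀ x y, 0 ≤ P x y) (hProw : ∀ x, ∑ y, P x y = 1)
    (hPrev : ∀ x y, π x * P x y = π y * P y x)
    (hPerg : ∃ k : ℕ, ∀ x y, 0 < (P ^ k) x y)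
    (f : X → ℝ) (hf0 : ∑ x, π x * f x = 0) :
    ∃ h : X → ℝ, (1 - P).mulVec h = f := by
  have hne : Nonempty X := by
    by_contra hc
    rw [not_nonempty_iff] at hc
    rw [Finset.univ_eq_empty, Finset.sum_empty] at hπsum
    norm_num at hπsum
  set T : (X → ℝ) →ₗ[ℝ] (X → ℝ) := Matrix.mulVecLin (1 - P) with hT
  set φ : (X → ℝ) →ₗ[ℝ] ℝ :=
    { toFun := fun g => ∑ x, π x * g x
      map_add' := fun a b => by
        simp only [Pi.add_apply, mul_add]
        exact Finset.sum_add_distrib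
      map_smul' := fun c a => by
        simp only [Pi.smul_apply, smul_eq_mul, RingHom.id_apply, Finset.mul_sum]
        exact Finset.sum_congr rfl fun x _ => by ring } with hφ
  have hconst : P.mulVec (fun _ => (1:ℝ)) = fun _ => (1:ℝ) := by
    funext x
    simp [Matrix.mulVec, dotProduct, hProw x]
  have hkerT : LinearMap.ker T = Submodule.span ℝ {fun _ : X => (1:ℝ)} := by
    apply le_antisymm
    · intro h hh
      have h0 : (1 - P).mulVec h = 0 := hh
      have hPh : P.mulVec h = h := by
        have h1 : (1 : Matrix X X ℝ).mulVec h - P.mulVec h = 0 := by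
          rw [← Matrix.sub_mulVec]; exact h0
        rw [Matrix.one_mulVec] at h1
        exact (sub_eq_zero.1 h1).symm
      have hc := harmonic_const P hPnn hProw hPerg h hPh
      have : h = h (Classical.arbitrary X) • (fun _ : X => (1:ℝ)) := by
        funext x
        simp [hc x (Classical.arbitrary X)]
      rw [this]
      exact Submodule.smul_mem _ _ (Submodule.mem_span_singleton_self _)
    · rw [Submodule.span_le]
      rintro v hv
      rw [Set.mem_singleton_iff] at hv
      subst hv
      show (1 - P).mulVec (fun _ => (1:ℝ)) = 0
      rw [Matrix.sub_mulVec, Matrix.one_mulVec, hconst, sub_self]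
  have h1ne : (fun _ : X => (1:ℝ)) ≠ 0 := by
    intro hcon
    have := congrFun hcon (Classical.arbitrary X)
    norm_num at this
  have hkerdim : Module.finrank ℝ (LinearMap.ker T) = 1 := by
    rw [hkerT]; exact finrank_span_singleton h1ne
  have hφsurj : Function.Surjective φ := by
    intro r
    refine ⟨fun _ => r, ?_⟩
    show ∑ x, π x * r = r
    rw [← Finset.sum_mul, hπsum, one_mul]
  have hle : LinearMap.range T ≤ LinearMap.ker φ := by
    rintro v ⟨h, rfl⟩
    show φ (T h) = 0
    show ∑ x, π x * ((1 - P).mulVec h) x = 0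
    rw [Matrix.sub_mulVec, Matrix.one_mulVec]
    have : ∑ x, π x * (h - P.mulVec h) x
        = ∑ x, π x * h x - ∑ x, π x * (P.mulVec h) x := by
      rw [← Finset.sum_sub_distrib]
      exact Finset.sum_congr rfl fun x _ => by simp [Pi.sub_apply]; ring
    rw [this, mean_preserved π P hProw hPrev h, sub_self]
  have hkerφdim : Module.finrank ℝ (LinearMap.ker φ) + 1 = Fintype.card X := by
    have e2 := LinearMap.finrank_range_add_finrank_ker φ
    have hrtop : LinearMap.range φ = ⊤ := LinearMap.range_eq_top.2 hφsurj
    rw [hrtop, finrank_top, Module.finrank_self, Module.finrank_fintype_fun_eq_card] at e2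
    omega
  have hrangedim : Module.finrank ℝ (LinearMap.range T) = Module.finrank ℝ (LinearMap.ker φ) := by
    have e1 := LinearMap.finrank_range_add_finrank_ker T
    rw [hkerdim, Module.finrank_fintype_fun_eq_card] at e1
    omega
  have heq : LinearMap.range T = LinearMap.ker φ :=
    Submodule.eq_of_le_of_finrank_eq hle hrangedim
  have hf : f ∈ LinearMap.ker φ := hf0
  rw [← heq] at hf
  obtain ⟨h, hh⟩ := hf
  exact ⟨h, hh⟩

end poisson

section more
variable {X : Type*} [Fintype X] [DecidableEq X]

lemma ipPi_add_left (π a b c : X → ℝ) : ipPi π (a + b) c = ipPi π a c + ipPi π b c := by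
  unfold ipPi
  rw [← Finset.sum_add_distrib]
  exact Finset.sum_congr rfl fun x _ => by rw [Pi.add_apply]; ring

lemma ipPi_smul_left (π : X → ℝ) (r : ℝ) (a c : X → ℝ) :
    ipPi π (r • a) c = r * ipPi π a c := by
  unfold ipPi
  rw [Finset.mul_sum]
  exact Finset.sum_congr rfl fun x _ => by rw [Pi.smul_apply, smul_eq_mul]; ring

end more

theorem asympVar_of_mixture_le
    {X : Type*} [Fintype X] [DecidableEq X]
    (π : X → ℝ) (hπpos : ∀ x, 0 < π x) (hπsum : ∑ x, π x = 1)
    (Q : Matrix X X ℝ)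
    (hQnn : ∀ x y, 0 ≤ Q x y) (hQrow : ∀ x, ∑ y, Q x y = 1)
    (hQinv : Q * Q = 1) (hQdb : ∀ x y, π x * Q x y = π y * Q y x)
    (P : Matrix X X ℝ)
    (hPnn : ∀ x y, 0 ≤ P x y) (hProw : ∀ x, ∑ y, P x y = 1)
    (hPrev : ∀ x y, π x * P x y = π y * P y x)
    (hPerg : ∃ k : ℕ, ∀ x y, 0 < (P ^ k) x y)
    (α : ℝ) (hα0 : 0 ≤ α) (hα1 : α ≤ 1)
    (f : X → ℝ) (hf0 : ∑ x, π x * f x = 0)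
    (hQf : Q.mulVec f = f ∨ Q.mulVec f = -f) :
    asympVarSup π f (α • P + (1 - α) • (Q * P * Q)) ≤ asympVarSup π f P := by
  classical
  set M := α • P + (1 - α) • (Q * P * Q) with hMdef
  have hπnn : ∀ x, 0 ≤ π x := fun x => (hπpos x).le
  have hIP : ∀ x y, π x * (1 - P) x y = π y * (1 - P) y x := by
    intro x y
    simp only [Matrix.sub_apply, mul_sub]
    rw [hPrev x y]
    congr 1
    by_cases hxy : x = y
    · subst hxy; rfl
    · simp [Matrix.one_apply, hxy, Ne.symm hxy]
  obtain ⟨h, hh⟩ := exists_poisson π hπpos hπsum P hPnn hProw hPrev hPerg f hf0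
  have Epsd : ∀ v : X → ℝ, 0 ≤ ipPi π ((1 - P).mulVec v) v := by
    intro v
    rw [Matrix.sub_mulVec, Matrix.one_mulVec, ipPi_sub_left]
    have := ipPi_mulVec_le π hπnn P hPnn hProw hPrev v
    linarith
  have Esymm : ∀ a b : X → ℝ, ipPi π ((1 - P).mulVec a) b = ipPi π ((1 - P).mulVec b) a :=
    fun a b => ipPi_adj π (1 - P) hIP a b
  have keyb : ∀ g : X → ℝ,
      4 * ipPi π f g - 2 * ipPi π ((1 - P).mulVec g) g - ipPi π f f
        ≤ 2 * ipPi π f h - ipPi π f f := by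
    intro g
    have e0 := Epsd (g - h)
    rw [Matrix.mulVec_sub, ipPi_sub_left, ipPi_comm π _ (g - h), ipPi_sub_left,
      ipPi_comm π _ (g - h), ipPi_sub_left] at e0
    have hsym := Esymm g h
    have hfg : ipPi π f g = ipPi π ((1 - P).mulVec h) g := by rw [hh]
    have hfh : ipPi π f h = ipPi π ((1 - P).mulVec h) h := by rw [hh]
    rw [ipPi_comm π g ((1 - P).mulVec g), ipPi_comm π h ((1 - P).mulVec g),
      ipPi_comm π g ((1 - P).mulVec h), ipPi_comm π h ((1 - P).mulVec h)] at e0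
    linarith [e0, hsym, hfg, hfh]
  have hbdd : BddAbove {r : ℝ | ∃ g : X → ℝ, (∑ x, π x * g x) = 0 ∧
      r = 4 * ipPi π f g - 2 * ipPi π ((1 - P).mulVec g) g - ipPi π f f} := by
    refine ⟨2 * ipPi π f h - ipPi π f f, ?_⟩
    rintro r ⟨g, -, rfl⟩
    exact keyb g
  have hmemP : ∀ g : X → ℝ, (∑ x, π x * g x) = 0 →
      4 * ipPi π f g - 2 * ipPi π ((1 - P).mulVec g) g - ipPi π f f ≤ asympVarSup π f P := by
    intro g hg
    exact le_csSup hbdd ⟨g, hg, rfl⟩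
  unfold asympVarSup
  apply csSup_le
  · refine ⟨-ipPi π f f, 0, by simp, ?_⟩
    simp [ipPi]
  rintro r ⟨g, hg0, rfl⟩
  have hQg : ipPi π (Q.mulVec g) (Q.mulVec g) = ipPi π g g := by
    rw [ipPi_adj π Q hQdb g (Q.mulVec g), Matrix.mulVec_mulVec, hQinv, Matrix.one_mulVec]
  have hQPQ : ipPi π (P.mulVec (Q.mulVec g)) (Q.mulVec g)
      = ipPi π ((Q * P * Q).mulVec g) g := by
    rw [ipPi_comm, ipPi_adj π Q hQdb _ (P.mulVec (Q.mulVec g)), Matrix.mulVec_mulVec,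
      Matrix.mulVec_mulVec, Matrix.mul_assoc]
  have hquad : ipPi π ((1 - M).mulVec g) g
      = α * ipPi π ((1 - P).mulVec g) g
        + (1 - α) * ipPi π ((1 - P).mulVec (Q.mulVec g)) (Q.mulVec g) := by
    have hMg : (1 - M).mulVec g
        = g - (α • P.mulVec g + (1 - α) • (Q * P * Q).mulVec g) := by
      rw [Matrix.sub_mulVec, Matrix.one_mulVec, hMdef, Matrix.add_mulVec,
        Matrix.smul_mulVec, Matrix.smul_mulVec]
    rw [hMg, ipPi_sub_left, ipPi_add_left, ipPi_smul_left, ipPi_smul_left]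
    rw [Matrix.sub_mulVec, Matrix.one_mulVec, ipPi_sub_left,
      Matrix.sub_mulVec, Matrix.one_mulVec, ipPi_sub_left, hQg, hQPQ]
    ring
  have hlin : ∃ g' : X → ℝ, (∑ x, π x * g' x) = 0 ∧ ipPi π f g' = ipPi π f g ∧
      ipPi π ((1 - P).mulVec g') g'
        = ipPi π ((1 - P).mulVec (Q.mulVec g)) (Q.mulVec g) := by
    rcases hQf with hQf | hQf
    · refine ⟨Q.mulVec g, ?_, ?_, rfl⟩
      · rw [mean_preserved π Q hQrow hQdb g, hg0]
      · rw [ipPi_comm, ipPi_adj π Q hQdb g f, hQf, ipPi_comm]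
    · refine ⟨-(Q.mulVec g), ?_, ?_, ?_⟩
      · have := mean_preserved π Q hQrow hQdb g
        rw [hg0] at this
        calc ∑ x, π x * (-(Q.mulVec g)) x = -∑ x, π x * (Q.mulVec g) x := by
              rw [← Finset.sum_neg_distrib]
              exact Finset.sum_congr rfl fun x _ => by rw [Pi.neg_apply]; ring
          _ = 0 := by rw [this, neg_zero]
      · rw [ipPi_neg_right, ipPi_comm, ipPi_adj π Q hQdb g f, hQf, ipPi_neg_left,
          ipPi_comm, neg_neg]
      · rw [Matrix.mulVec_neg, ipPi_neg_left, ipPi_neg_right, neg_neg]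
  obtain ⟨g', hg'0, hg'f, hg'E⟩ := hlin
  have ha := hmemP g hg0
  have hb := hmemP g' hg'0
  have hsplit : 4 * ipPi π f g - 2 * ipPi π ((1 - M).mulVec g) g - ipPi π f f
      = α * (4 * ipPi π f g - 2 * ipPi π ((1 - P).mulVec g) g - ipPi π f f)
        + (1 - α) * (4 * ipPi π f g' - 2 * ipPi π ((1 - P).mulVec g') g' - ipPi π f f) := by
    rw [hquad, hg'f, hg'E]; ring
  rw [hsplit]
  unfold asympVarSup at ha hb
  have h1 := mul_le_mul_of_nonneg_left ha hα0
  have h2 := mul_le_mul_of_nonneg_left hb (by linarith : (0:ℝ) ≤ 1 - α)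
  linarith
end
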